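/- Let A be a strictly positive operator on H, B = diag(A,A), and X, Y ∈ B_A(H). Then w_B([[X,Y],[Y,X]]) = max{w_A(X+Y), w_A(X−Y)}. In particular, w_B([[0,Y],[Y,0]]) = w_A(Y). -/

import Mathlib

noncomputable section
open Complex ContinuousLinearMap

variable {H : Type*} [NormedAddCommGroup H] [InnerProductSpace ℂ H] [CompleteSpace H]

/-- The `A`-inner product `⟨x,y⟩_A = ⟨Ax,y⟩`. -/
def innA (A : H →L[ℂ] H) (x y : H) : ℂ := inner ℂ (A x) y

/-- The `A`-seminorm of a vector, `‖x‖_A = √⟨x,x⟩_A`. -/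
def vnormA (A : H →L[ℂ] H) (x : H) : ℝ := Real.sqrt (innA A x x).re

/-- The `A`-numerical radius `w_A(T) = sup{|⟨Tx,x⟩_A| : ‖x‖_A = 1}`. -/
def wA (A T : H →L[ℂ] H) : ℝ :=
  sSup {r : ℝ | ∃ x : H, vnormA A x = 1 ∧ r = ‖innA A (T x) x‖}

/-- The `A`-operator seminorm, `sup` over `A`-unit vectors in the closure of the range of `A`. -/
def opNormA (A T : H →L[ℂ] H) : ℝ :=
  sSup {r : ℝ | ∃ x : H, x ∈ closure (Set.range A) ∧ vnormA A x = 1 ∧ r = vnormA A (T x)}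

/-- The `A`-operator seminorm, `sup` over all `A`-unit vectors (used when `A > 0`). -/
def opNormA' (A T : H →L[ℂ] H) : ℝ :=
  sSup {r : ℝ | ∃ x : H, vnormA A x = 1 ∧ r = vnormA A (T x)}

/-- The `A`-Crawford number `c_A(T) = inf{|⟨Tx,x⟩_A| : ‖x‖_A = 1}`. -/
def cA (A T : H →L[ℂ] H) : ℝ :=
  sInf {r : ℝ | ∃ x : H, vnormA A x = 1 ∧ r = ‖innA A (T x) x‖}

/-- The `A`-minimum modulus `m_A(T) = inf{‖Tx‖_A : ‖x‖_A = 1}` (version for `A > 0`). -/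
def mA (A T : H →L[ℂ] H) : ℝ :=
  sInf {r : ℝ | ∃ x : H, vnormA A x = 1 ∧ r = vnormA A (T x)}

/-- `S` is an `A`-adjoint of `T`, i.e. `A S = T* A`. -/
def IsAAdjoint (A T S : H →L[ℂ] H) : Prop :=
  A.comp S = (ContinuousLinearMap.adjoint T).comp A

/-- `A` is strictly positive: positive and `⟨Ax,x⟩ > 0` for all `x ≠ 0`. -/
def StrictPos (A : H →L[ℂ] H) : Prop :=
  A.IsPositive ∧ ∀ x : H, x ≠ 0 → 0 < (innA A x x).re

/-- The inner product on `H ⊕ H`. -/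
def inn2 (u v : H × H) : ℂ := inner ℂ u.1 v.1 + inner ℂ u.2 v.2

/-- `B = diag(A, A)` acting on `H ⊕ H`. -/
def Bop (A : H →L[ℂ] H) : H × H →L[ℂ] H × H := A.prodMap A

/-- The `B`-seminorm on `H ⊕ H`. -/
def vnormB (A : H →L[ℂ] H) (u : H × H) : ℝ := Real.sqrt (inn2 (Bop A u) u).re

/-- The `B`-numerical radius on `H ⊕ H`, where `B = diag(A, A)`. -/
def wB (A : H →L[ℂ] H) (S : H × H →L[ℂ] H × H) : ℝ :=
  sSup {r : ℝ | ∃ u : H × H, vnormB A u = 1 ∧ r = ‖inn2 (Bop A (S u)) u‖}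

/-- The `2 × 2` operator matrix `[[X, Y], [Z, W]]` acting on `H ⊕ H`. -/
def blk (X Y Z W : H →L[ℂ] H) : H × H →L[ℂ] H × H :=
  ((X.comp (ContinuousLinearMap.fst ℂ H H)) + (Y.comp (ContinuousLinearMap.snd ℂ H H))).prod
    ((Z.comp (ContinuousLinearMap.fst ℂ H H)) + (W.comp (ContinuousLinearMap.snd ℂ H H)))

end

/-!
Write `S = [[X, Y], [Y, X]]` and `u = (x, y)`. Then
`2 ⟨S u, u⟩_B = ⟨(X + Y)(x + y), x + y⟩_A + ⟨(X - Y)(x - y), x - y⟩_A`, while the parallelogram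
law gives `‖x + y‖_A² + ‖x - y‖_A² = 2 ‖u‖_B²`; hence `w_B(S) ≤ max (w_A(X + Y)) (w_A(X - Y))`,
and the `B`-unit vectors `(x, ± x) / √2` give the reverse inequality. Taking `X = 0` gives the
second claim, as `w_A(-Y) = w_A(Y)`.

The suprema are finite because an operator with an `A`-adjoint is `A`-bounded (Lax). If
`A R = R* A`, Cauchy–Schwarz gives `‖R x‖_A² ≤ ‖x‖_A ‖R² x‖_A`; iterating along the powers
`R^(2^n)`, the crude bound `‖R^(2^n) x‖_A ≤ √‖A‖ ‖R‖^(2^n) ‖x‖` becomes `‖R x‖_A ≤ ‖R‖ ‖x‖_A` in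
the limit. For `T` with `A`-adjoint `S`, apply this to the `A`-selfadjoint `S T`, using
`‖T x‖_A² ≤ ‖x‖_A ‖S T x‖_A`.
-/

open ContinuousLinearMap

variable {H : Type*} [NormedAddCommGroup H] [InnerProductSpace ℂ H]

def absNumRangeA (A T : H →L[ℂ] H) : Set ℝ :=
  {r : ℝ | ∃ x : H, vnormA A x = 1 ∧ r = ‖innA A (T x) x‖}

def absNumRangeB (A : H →L[ℂ] H) (S : H × H →L[ℂ] H × H) : Set ℝ :=
  {r : ℝ | ∃ u : H × H, vnormB A u = 1 ∧ r = ‖inn2 (Bop A (S u)) u‖}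

theorem wA_nonneg (A T : H →L[ℂ] H) : 0 ≤ wA A T :=
  Real.sSup_nonneg (by rintro _ ⟨x, -, rfl⟩; positivity)

theorem wB_nonneg (A : H →L[ℂ] H) (S : H × H →L[ℂ] H × H) : 0 ≤ wB A S :=
  Real.sSup_nonneg (by rintro _ ⟨u, -, rfl⟩; positivity)

theorem absNumRangeA_neg (A T : H →L[ℂ] H) : absNumRangeA A (-T) = absNumRangeA A T := by
  simp [absNumRangeA, innA, inner_neg_left]

theorem wA_neg (A T : H →L[ℂ] H) : wA A (-T) = wA A T :=
  congrArg sSup (absNumRangeA_neg A T)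

theorem innA_smul_smul (A : H →L[ℂ] H) (c : ℂ) (x y : H) :
    innA A (c • x) (c • y) = Complex.normSq c * innA A x y := by
  simp only [innA, map_smul, inner_smul_left, inner_smul_right, Complex.normSq_eq_conj_mul_self]
  ring

theorem vnormA_nonneg (A : H →L[ℂ] H) (x : H) : 0 ≤ vnormA A x := Real.sqrt_nonneg _

theorem vnormA_smul (A : H →L[ℂ] H) (c : ℂ) (x : H) : vnormA A (c • x) = ‖c‖ * vnormA A x := by
  rw [vnormA, vnormA, innA_smul_smul, Complex.re_ofReal_mul,
    Real.sqrt_mul (Complex.normSq_nonneg c), Complex.norm_def]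

theorem vnormA_le_sqrt_norm_mul_norm (A : H →L[ℂ] H) (x : H) : vnormA A x ≤ √‖A‖ * ‖x‖ := by
  have h : (innA A x x).re ≤ ‖A‖ * ‖x‖ ^ 2 :=
    calc (innA A x x).re ≤ ‖A x‖ * ‖x‖ := re_inner_le_norm (𝕜 := ℂ) _ _
      _ ≤ ‖A‖ * ‖x‖ * ‖x‖ := by gcongr; exact A.le_opNorm x
      _ = ‖A‖ * ‖x‖ ^ 2 := by ring
  calc vnormA A x ≤ √(‖A‖ * ‖x‖ ^ 2) := Real.sqrt_le_sqrt h
    _ = √‖A‖ * ‖x‖ := by rw [Real.sqrt_mul (norm_nonneg A), Real.sqrt_sq (norm_nonneg x)]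

theorem inn2_blk_diag (A X Y : H →L[ℂ] H) (z : H) :
    inn2 (Bop A (blk X Y Y X (z, z))) (z, z) = 2 * innA A ((X + Y) z) z := by
  simp only [inn2, Bop, blk, innA, add_apply, comp_apply, prod_apply, coe_prodMap', coe_fst',
    coe_snd', Prod.map_apply, map_add, inner_add_left]
  ring

theorem inn2_blk_antidiag (A X Y : H →L[ℂ] H) (z : H) :
    inn2 (Bop A (blk X Y Y X (z, -z))) (z, -z) = 2 * innA A ((X - Y) z) z := by
  simp only [inn2, Bop, blk, innA, add_apply, sub_apply, comp_apply, prod_apply, coe_prodMap',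
    coe_fst', coe_snd', Prod.map_apply, map_add, map_sub, map_neg, inner_add_left,
    inner_sub_left, inner_neg_left, inner_neg_right]
  ring

theorem two_mul_inn2_blk (A X Y : H →L[ℂ] H) (x y : H) :
    2 * inn2 (Bop A (blk X Y Y X (x, y))) (x, y) =
      innA A ((X + Y) (x + y)) (x + y) + innA A ((X - Y) (x - y)) (x - y) := by
  simp only [inn2, Bop, blk, innA, add_apply, sub_apply, comp_apply, prod_apply, coe_prodMap',
    coe_fst', coe_snd', Prod.map_apply, map_add, map_sub, inner_add_left, inner_add_right,
    inner_sub_left, inner_sub_right]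
  ring

theorem vnormB_diag (A : H →L[ℂ] H) (z : H) : vnormB A (z, z) = √2 * vnormA A z := by
  rw [vnormB, vnormA, ← Real.sqrt_mul zero_le_two]
  simp only [inn2, Bop, coe_prodMap', Prod.map_apply, Complex.add_re, innA]
  ring_nf

theorem vnormB_antidiag (A : H →L[ℂ] H) (z : H) : vnormB A (z, -z) = √2 * vnormA A z := by
  rw [vnormB, vnormA, ← Real.sqrt_mul zero_le_two]
  simp only [inn2, Bop, coe_prodMap', Prod.map_apply, map_neg, inner_neg_left, inner_neg_right,
    neg_neg, Complex.add_re, innA]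
  ring_nf

theorem absNumRangeA_add_subset (A X Y : H →L[ℂ] H) :
    absNumRangeA A (X + Y) ⊆ absNumRangeB A (blk X Y Y X) := by
  rintro _ ⟨x, hx, rfl⟩
  set c : ℂ := (((√2)⁻¹ : ℝ) : ℂ)
  have hc : Complex.normSq c = 2⁻¹ := by
    rw [Complex.normSq_ofReal, ← mul_inv, Real.mul_self_sqrt zero_le_two]
  refine ⟨(c • x, c • x), ?_, ?_⟩
  · rw [vnormB_diag, vnormA_smul, hx, Complex.norm_real, norm_inv,
      Real.norm_of_nonneg (by positivity)]
    field_simp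
  · rw [inn2_blk_diag, map_smul, innA_smul_smul, hc, ← mul_assoc]
    norm_num

theorem absNumRangeA_sub_subset (A X Y : H →L[ℂ] H) :
    absNumRangeA A (X - Y) ⊆ absNumRangeB A (blk X Y Y X) := by
  rintro _ ⟨x, hx, rfl⟩
  set c : ℂ := (((√2)⁻¹ : ℝ) : ℂ)
  have hc : Complex.normSq c = 2⁻¹ := by
    rw [Complex.normSq_ofReal, ← mul_inv, Real.mul_self_sqrt zero_le_two]
  refine ⟨(c • x, -(c • x)), ?_, ?_⟩
  · rw [vnormB_antidiag, vnormA_smul, hx, Complex.norm_real, norm_inv,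
      Real.norm_of_nonneg (by positivity)]
    field_simp
  · rw [inn2_blk_antidiag, map_smul, innA_smul_smul, hc, ← mul_assoc]
    norm_num

section Positive

variable {A : H →L[ℂ] H} (hA : A.IsPositive)
include hA

@[reducible]
noncomputable def preInnerProductCoreA : PreInnerProductSpace.Core ℂ H where
  inner := innA A
  conj_inner_symm x y := by simp only [innA, inner_conj_symm]; exact (hA.1 x y).symm
  re_inner_nonneg x := hA.2 x
  add_left x y z := by simp only [innA, map_add, inner_add_left]
  smul_left x y r := by simp only [innA, map_smul, inner_smul_left]

theorem norm_innA_le (x y : H) : ‖innA A x y‖ ≤ vnormA A x * vnormA A y :=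
  @InnerProductSpace.Core.norm_inner_le_norm ℂ H _ _ _ (preInnerProductCoreA hA) x y

theorem vnormA_sq (x : H) : vnormA A x ^ 2 = (innA A x x).re :=
  Real.sq_sqrt (hA.2 x)

theorem vnormB_sq (x y : H) : vnormB A (x, y) ^ 2 = vnormA A x ^ 2 + vnormA A y ^ 2 := by
  rw [vnormA_sq hA, vnormA_sq hA, ← Complex.add_re]
  exact Real.sq_sqrt (add_nonneg (hA.2 x) (hA.2 y))

theorem vnormA_add_sq_add_vnormA_sub_sq (x y : H) :
    vnormA A (x + y) ^ 2 + vnormA A (x - y) ^ 2 = 2 * (vnormA A x ^ 2 + vnormA A y ^ 2) := by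
  have h : innA A (x + y) (x + y) + innA A (x - y) (x - y) = 2 * (innA A x x + innA A y y) := by
    simp only [innA, map_add, map_sub, inner_add_left, inner_add_right, inner_sub_left,
      inner_sub_right]
    ring
  simp only [vnormA_sq hA, ← Complex.add_re, h, Complex.mul_re, Complex.re_ofNat, Complex.im_ofNat,
    zero_mul, sub_zero]

theorem norm_innA_le_wA_mul {T : H →L[ℂ] H} (hT : BddAbove (absNumRangeA A T)) (p : H) :
    ‖innA A (T p) p‖ ≤ wA A T * vnormA A p ^ 2 := by
  rcases (vnormA_nonneg A p).eq_or_lt with hp | hp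
  · calc ‖innA A (T p) p‖ ≤ vnormA A (T p) * vnormA A p := norm_innA_le hA _ _
      _ = wA A T * vnormA A p ^ 2 := by rw [← hp]; ring
  set c : ℂ := (((vnormA A p)⁻¹ : ℝ) : ℂ)
  have hc : ‖c‖ = (vnormA A p)⁻¹ := by
    rw [Complex.norm_real, norm_inv, Real.norm_of_nonneg hp.le]
  have hunit : vnormA A (c • p) = 1 := by
    rw [vnormA_smul, hc, inv_mul_cancel₀ hp.ne']
  calc ‖innA A (T p) p‖ = vnormA A p ^ 2 * ‖innA A (T (c • p)) (c • p)‖ := by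
        rw [map_smul, innA_smul_smul, norm_mul, Complex.normSq_eq_norm_sq, hc, Complex.norm_real,
          Real.norm_of_nonneg (by positivity)]
        field_simp
    _ ≤ vnormA A p ^ 2 * wA A T := by gcongr; exact le_csSup hT ⟨c • p, hunit, rfl⟩
    _ = wA A T * vnormA A p ^ 2 := mul_comm _ _

theorem norm_inn2_blk_le {X Y : H →L[ℂ] H} (hP : BddAbove (absNumRangeA A (X + Y)))
    (hM : BddAbove (absNumRangeA A (X - Y))) {u : H × H} (hu : vnormB A u = 1) :
    ‖inn2 (Bop A (blk X Y Y X u)) u‖ ≤ max (wA A (X + Y)) (wA A (X - Y)) := by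
  obtain ⟨x, y⟩ := u
  set m := max (wA A (X + Y)) (wA A (X - Y))
  have hsum : vnormA A (x + y) ^ 2 + vnormA A (x - y) ^ 2 = 2 := by
    rw [vnormA_add_sq_add_vnormA_sub_sq hA, ← vnormB_sq hA, hu]
    norm_num
  have h2 : 2 * ‖inn2 (Bop A (blk X Y Y X (x, y))) (x, y)‖ ≤ 2 * m :=
    calc 2 * ‖inn2 (Bop A (blk X Y Y X (x, y))) (x, y)‖
        = ‖innA A ((X + Y) (x + y)) (x + y) + innA A ((X - Y) (x - y)) (x - y)‖ := by
          rw [← two_mul_inn2_blk, norm_mul, Complex.norm_two]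
      _ ≤ ‖innA A ((X + Y) (x + y)) (x + y)‖ + ‖innA A ((X - Y) (x - y)) (x - y)‖ :=
          norm_add_le _ _
      _ ≤ wA A (X + Y) * vnormA A (x + y) ^ 2 + wA A (X - Y) * vnormA A (x - y) ^ 2 :=
          add_le_add (norm_innA_le_wA_mul hA hP _) (norm_innA_le_wA_mul hA hM _)
      _ ≤ m * vnormA A (x + y) ^ 2 + m * vnormA A (x - y) ^ 2 := by
          gcongr
          exacts [le_max_left _ _, le_max_right _ _]
      _ = 2 * m := by rw [← mul_add, hsum, mul_comm]
  linarith

theorem wB_blk_eq_max {X Y : H →L[ℂ] H} (hP : BddAbove (absNumRangeA A (X + Y)))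
    (hM : BddAbove (absNumRangeA A (X - Y))) :
    wB A (blk X Y Y X) = max (wA A (X + Y)) (wA A (X - Y)) := by
  have hle : ∀ r ∈ absNumRangeB A (blk X Y Y X), r ≤ max (wA A (X + Y)) (wA A (X - Y)) := by
    rintro _ ⟨u, hu, rfl⟩
    exact norm_inn2_blk_le hA hP hM hu
  have hbdd : BddAbove (absNumRangeB A (blk X Y Y X)) := ⟨_, hle⟩
  refine le_antisymm (Real.sSup_le hle (le_max_of_le_left (wA_nonneg A _))) (max_le ?_ ?_)
  · exact Real.sSup_le (fun r hr ↦ le_csSup hbdd (absNumRangeA_add_subset A X Y hr))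
      (wB_nonneg A _)
  · exact Real.sSup_le (fun r hr ↦ le_csSup hbdd (absNumRangeA_sub_subset A X Y hr))
      (wB_nonneg A _)

end Positive

theorem le_of_forall_pow_two_pow_mul_le {a b c K : ℝ} (hb : 0 < b) (hc : 0 ≤ c)
    (h : ∀ n : ℕ, a ^ 2 ^ n * b ≤ c ^ 2 ^ n * K) : a ≤ c := by
  by_contra! hca
  rcases hc.eq_or_lt with rfl | hc
  · have h0 := h 0
    norm_num at h0
    exact (mul_pos hca hb).not_ge h0
  · have hq : 1 < a / c := (one_lt_div hc).2 hca
    obtain ⟨n, hn⟩ := pow_unbounded_of_one_lt (K / b) hq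
    have hle : (a / c) ^ 2 ^ n ≤ K / b := by
      rw [div_pow, div_le_div_iff₀ (by positivity) hb]
      linarith [h n]
    exact (hn.trans_le ((pow_le_pow_right₀ hq.le Nat.lt_two_pow_self.le).trans hle)).false

variable [CompleteSpace H]

section AAdjoint

variable {A T S : H →L[ℂ] H}

theorem IsAAdjoint.symm (hA : A.IsPositive) (h : IsAAdjoint A T S) : IsAAdjoint A S T := by
  have h' := congrArg adjoint h
  rw [adjoint_comp, adjoint_comp, adjoint_adjoint, hA.isSelfAdjoint.adjoint_eq] at h'
  exact h'.symm

theorem IsAAdjoint.add {T' S' : H →L[ℂ] H} (h : IsAAdjoint A T S) (h' : IsAAdjoint A T' S') :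
    IsAAdjoint A (T + T') (S + S') := by
  rw [IsAAdjoint, comp_add, h, h', map_add, add_comp]

theorem IsAAdjoint.sub {T' S' : H →L[ℂ] H} (h : IsAAdjoint A T S) (h' : IsAAdjoint A T' S') :
    IsAAdjoint A (T - T') (S - S') := by
  rw [IsAAdjoint, comp_sub, h, h', map_sub, sub_comp]

theorem IsAAdjoint.comp {T' S' : H →L[ℂ] H} (h : IsAAdjoint A T S) (h' : IsAAdjoint A T' S') :
    IsAAdjoint A (T ∘L T') (S' ∘L S) := by
  rw [IsAAdjoint, adjoint_comp, ← comp_assoc, h', comp_assoc, h, comp_assoc]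

theorem IsAAdjoint.pow_self {R : H →L[ℂ] H} (h : IsAAdjoint A R R) (n : ℕ) :
    IsAAdjoint A (R ^ n) (R ^ n) := by
  induction n with
  | zero => simp [IsAAdjoint, one_def, adjoint_id]
  | succ n ih =>
    have h' := ih.comp h
    rwa [← mul_def, ← mul_def, ← pow_succ, ← pow_succ'] at h'

theorem IsAAdjoint.innA_apply_left (hA : A.IsPositive) (h : IsAAdjoint A T S) (x y : H) :
    innA A (T x) y = innA A x (S y) := by
  have hy : A (S y) = adjoint T (A y) := congrArg (fun F : H →L[ℂ] H ↦ F y) h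
  rw [innA, innA, hA.inner_left_eq_inner_right, hA.inner_left_eq_inner_right, hy,
    adjoint_inner_right]

theorem vnormA_apply_sq_le (hA : A.IsPositive) (h : IsAAdjoint A T S) (x : H) :
    vnormA A (T x) ^ 2 ≤ vnormA A x * vnormA A (S (T x)) := by
  rw [vnormA_sq hA, h.innA_apply_left hA]
  exact (Complex.re_le_norm _).trans (norm_innA_le hA _ _)

theorem vnormA_apply_pow_two_pow_le (hA : A.IsPositive) {R : H →L[ℂ] H} (hR : IsAAdjoint A R R)
    (x : H) (n : ℕ) :
    vnormA A (R x) ^ 2 ^ n * vnormA A x ≤ vnormA A x ^ 2 ^ n * vnormA A ((R ^ 2 ^ n) x) := by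
  induction n with
  | zero => simp [mul_comm]
  | succ n ih =>
    have hsq : R ^ 2 ^ (n + 1) = R ^ 2 ^ n * R ^ 2 ^ n := by rw [pow_succ, pow_mul, sq]
    have step := vnormA_apply_sq_le hA (hR.pow_self (2 ^ n)) x
    rw [← mul_apply_eq_comp, ← hsq] at step
    set a := vnormA A (R x)
    set b := vnormA A x
    have ha : 0 ≤ a := vnormA_nonneg A _
    rcases (show 0 ≤ b from vnormA_nonneg A x).eq_or_lt with hb | hb
    · rw [← hb]
      simp
    refine le_of_mul_le_mul_right ?_ hb
    calc a ^ 2 ^ (n + 1) * b * b = (a ^ 2 ^ n * b) ^ 2 := by ring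
      _ ≤ (b ^ 2 ^ n * vnormA A ((R ^ 2 ^ n) x)) ^ 2 :=
          pow_le_pow_left₀ (mul_nonneg (pow_nonneg ha _) hb.le) ih 2
      _ = b ^ 2 ^ (n + 1) * vnormA A ((R ^ 2 ^ n) x) ^ 2 := by ring
      _ ≤ b ^ 2 ^ (n + 1) * (b * vnormA A ((R ^ 2 ^ (n + 1)) x)) := by gcongr
      _ = b ^ 2 ^ (n + 1) * vnormA A ((R ^ 2 ^ (n + 1)) x) * b := by ring

theorem vnormA_apply_le_of_isAAdjoint_self (hA : A.IsPositive) {R : H →L[ℂ] H}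
    (hR : IsAAdjoint A R R) (x : H) : vnormA A (R x) ≤ ‖R‖ * vnormA A x := by
  rcases (vnormA_nonneg A x).eq_or_lt with hb | hb
  · have h := vnormA_apply_sq_le hA hR x
    rw [← hb, zero_mul] at h
    rw [← hb, mul_zero]
    exact ((sq_nonpos_iff _).1 h).le
  refine le_of_forall_pow_two_pow_mul_le hb (by positivity) (K := √‖A‖ * ‖x‖) fun n ↦ ?_
  calc vnormA A (R x) ^ 2 ^ n * vnormA A x
      ≤ vnormA A x ^ 2 ^ n * vnormA A ((R ^ 2 ^ n) x) :=
        vnormA_apply_pow_two_pow_le hA hR x n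
    _ ≤ vnormA A x ^ 2 ^ n * (√‖A‖ * (‖R‖ ^ 2 ^ n * ‖x‖)) := by
        gcongr
        refine (vnormA_le_sqrt_norm_mul_norm A _).trans ?_
        gcongr
        exact (le_opNorm _ _).trans (by gcongr; exact norm_pow_le' R (by positivity))
    _ = (‖R‖ * vnormA A x) ^ 2 ^ n * (√‖A‖ * ‖x‖) := by ring

theorem IsAAdjoint.bddAbove_absNumRangeA (hA : A.IsPositive) (h : IsAAdjoint A T S) :
    BddAbove (absNumRangeA A T) := by
  refine ⟨√‖S ∘L T‖, ?_⟩
  rintro _ ⟨x, hx, rfl⟩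
  have hTx := vnormA_apply_sq_le hA h x
  have hSTx := vnormA_apply_le_of_isAAdjoint_self hA ((h.symm hA).comp h) x
  rw [hx, one_mul] at hTx
  rw [hx, mul_one] at hSTx
  calc ‖innA A (T x) x‖ ≤ vnormA A (T x) * vnormA A x := norm_innA_le hA _ _
    _ = vnormA A (T x) := by rw [hx, mul_one]
    _ ≤ √‖S ∘L T‖ := Real.le_sqrt_of_sq_le (hTx.trans hSTx)

end AAdjoint

theorem stmt6 (A X Y : H →L[ℂ] H) (hA : StrictPos A)
    (hX : ∃ S, IsAAdjoint A X S) (hY : ∃ S, IsAAdjoint A Y S) :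
    wB A (blk X Y Y X) = max (wA A (X + Y)) (wA A (X - Y)) ∧
    wB A (blk 0 Y Y 0) = wA A Y := by
  obtain ⟨SX, hSX⟩ := hX
  obtain ⟨SY, hSY⟩ := hY
  have hYbdd := hSY.bddAbove_absNumRangeA hA.1
  refine ⟨wB_blk_eq_max hA.1 ((hSX.add hSY).bddAbove_absNumRangeA hA.1)
    ((hSX.sub hSY).bddAbove_absNumRangeA hA.1), ?_⟩
  have h := wB_blk_eq_max hA.1 (X := 0) (by rwa [zero_add]) (by rwa [zero_sub, absNumRangeA_neg])
  rwa [zero_add, zero_sub, wA_neg, max_self] at h
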